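/- Let (R, 𝔪) be a Noetherian local ring, M a finitely generated R-module, and x_1, …, x_t an M-regular sequence with t = dim M > 0. Then the limit closure (x)_M^{lim} equals (x_1, …, x_t)M. -/

import Mathlib

/-- The limit closure of a system of elements `x : Fin t → R` in the module `M`:
`(x)_M^{lim} = ⋃_{n>0} ((x_1^{n+1}, …, x_t^{n+1})M :_M (x_1⋯x_t)^n)`. -/
def limClosure {R : Type*} [CommRing R] {M : Type*} [AddCommGroup M] [Module R M]
    {t : ℕ} (x : Fin t → R) : Set M :=
  {m | ∃ n > 0, (∏ i, x i) ^ n • m ∈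
    (Ideal.span (Set.range fun i => x i ^ (n + 1)) • (⊤ : Submodule R M))}

/-!
Since `x_i · x_1⋯x_t ∈ (x_1², …, x_t²)`, the case `n = 1` already gives `(x)M ⊆ (x)_M^{lim}`.
For the converse, write the sequence as `y :: ys` and induct on its length. Powers of the head of
a regular sequence may replace it (weak regularity passes to the middle of the short exact
sequence `0 → M/yM → M/y^{k+1}M → M/y^kM → 0`), so `ys` is regular on `M/y^{n+1}M`, and the
induction hypothesis there gives `y^n m ∈ y^{n+1}M + (ys)M`. Regular sequences in the maximal
ideal of a Noetherian local ring may be permuted, so `y` is regular on `M/(ys)M`, and cancelling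
`y^n` there gives `m ∈ yM + (ys)M`.
-/

open Submodule IsLocalRing Pointwise

section

variable {R M : Type*} [CommRing R] [AddCommGroup M] [Module R M]

theorem Submodule.Quotient.mk_mem_smul_top_iff (P : Submodule R M) (I : Ideal R) {m : M} :
    (Submodule.Quotient.mk m : M ⧸ P) ∈ I • (⊤ : Submodule R (M ⧸ P)) ↔ m ∈ P ⊔ I • ⊤ := by
  rw [← comap_map_mkQ, map_smul'', Submodule.map_top, range_mkQ, mem_comap, mkQ_apply]

theorem mem_smul_top_sup_of_pow_smul_mem {y : R} {K : Submodule R M}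
    (hy : IsSMulRegular (M ⧸ K) y) {n : ℕ} {m : M}
    (h : y ^ n • m ∈ (y ^ (n + 1) • ⊤ ⊔ K : Submodule R M)) :
    m ∈ (y • ⊤ ⊔ K : Submodule R M) := by
  obtain ⟨v, hv, k, hk, hsum⟩ := mem_sup.mp h
  obtain ⟨u, -, rfl⟩ := (mem_smul_pointwise_iff_exists _ _ _).mp hv
  have hdiff : y ^ n • (m - y • u) ∈ K := by
    rw [smul_sub, smul_smul, ← pow_succ, ← hsum, add_sub_cancel_left]
    exact hk
  have hmod := mem_of_isSMulRegular_quotient_of_smul_mem (hy.pow n) hdiff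
  rw [← add_sub_cancel (y • u) m]
  exact add_mem (mem_sup_left ⟨u, trivial, rfl⟩) (mem_sup_right hmod)

theorem Ideal.span_singleton_prod_mul_ofList_le (L : List R) :
    Ideal.span {L.prod} * Ideal.ofList L ≤ Ideal.ofList (L.map (· ^ 2)) := by
  classical
  rw [Ideal.span_mul_span', Ideal.span_le]
  rintro _ ⟨_, rfl, r, hr, rfl⟩
  show L.prod * r ∈ _
  rw [← List.prod_erase hr, show r * (L.erase r).prod * r = r ^ 2 * (L.erase r).prod by ring]
  exact Ideal.mul_mem_right _ _ (Ideal.subset_span (List.mem_map_of_mem hr))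

theorem prod_smul_mem_ofList_map_sq_smul_top (L : List R) {m : M}
    (hm : m ∈ Ideal.ofList L • (⊤ : Submodule R M)) :
    L.prod • m ∈ Ideal.ofList (L.map (· ^ 2)) • (⊤ : Submodule R M) :=
  smul_mono_left (Ideal.span_singleton_prod_mul_ofList_le L) <| by
    rw [Submodule.mul_smul]
    exact smul_mem_smul (Ideal.mem_span_singleton_self _) hm

end

namespace RingTheory.Sequence

variable {R M M' M'' : Type*} [CommRing R] [AddCommGroup M] [Module R M]
  [AddCommGroup M'] [Module R M'] [AddCommGroup M''] [Module R M'']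

theorem IsWeaklyRegular.of_injective_of_exact_of_surjective {f : M →ₗ[R] M'}
    {g : M' →ₗ[R] M''} (hf : Function.Injective f) (hfg : Function.Exact f g)
    (hg : Function.Surjective g) {rs : List R} (h : IsWeaklyRegular M rs)
    (h'' : IsWeaklyRegular M'' rs) : IsWeaklyRegular M' rs := by
  induction rs generalizing M M' M'' with
  | nil => exact .nil R M'
  | cons r rs ih =>
    rw [isWeaklyRegular_cons_iff] at h h'' ⊢
    have hf' : Function.Injective (QuotSMulTop.map r f) := by
      have := QuotSMulTop.map_first_exact_on_four_term_exact_of_isSMulRegular_last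
        ((LinearMap.exact_zero_iff_injective M f).mpr hf) hfg h''.1
      rwa [map_zero, LinearMap.exact_zero_iff_injective] at this
    exact ⟨isSMulRegular_of_range_eq_ker hf hfg.linearMap_ker_eq.symm h.1 h''.1,
      ih hf' (QuotSMulTop.map_exact r hfg hg) (QuotSMulTop.map_surjective r hg) h.2 h''.2⟩

theorem IsWeaklyRegular.quotSMulTop_mul {a b : R} (hb : IsSMulRegular M b) {rs : List R}
    (ha : IsWeaklyRegular (QuotSMulTop a M) rs) (hb' : IsWeaklyRegular (QuotSMulTop b M) rs) :
    IsWeaklyRegular (QuotSMulTop (a * b) M) rs := by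
  have hle : a • (⊤ : Submodule R M) ≤ comap (b • LinearMap.id) ((a * b) • ⊤) := by
    rintro _ ⟨m, -, rfl⟩
    exact ⟨m, trivial, by simp [smul_smul]⟩
  have hle' : (a * b) • (⊤ : Submodule R M) ≤ b • ⊤ := by
    rintro _ ⟨m, -, rfl⟩
    exact ⟨a • m, trivial, by simp [smul_smul]⟩
  let f := mapQ _ _ (b • LinearMap.id) hle
  let g := factor hle'
  refine IsWeaklyRegular.of_injective_of_exact_of_surjective (f := f) (g := g) ?_ ?_
    (factor_surjective hle') ha hb'
  · refine (injective_iff_map_eq_zero f).mpr fun x hx => ?_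
    induction x using Submodule.Quotient.induction_on with | _ m
    obtain ⟨u, -, hu⟩ := (Quotient.mk_eq_zero _).mp hx
    refine (Quotient.mk_eq_zero _).mpr ⟨u, trivial, hb ?_⟩
    simpa [smul_smul, mul_comm] using hu
  · intro y
    induction y using Submodule.Quotient.induction_on with | _ m
    constructor
    · intro hm
      obtain ⟨u, -, rfl⟩ := (Quotient.mk_eq_zero _).mp hm
      exact ⟨Submodule.Quotient.mk u, rfl⟩
    · rintro ⟨z, hz⟩
      rw [← hz]
      induction z using Submodule.Quotient.induction_on with | _ u
      exact (Quotient.mk_eq_zero _).mpr ⟨u, trivial, rfl⟩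

theorem IsWeaklyRegular.quotSMulTop_pow {r : R} (hr : IsSMulRegular M r) {rs : List R}
    (h : IsWeaklyRegular (QuotSMulTop r M) rs) (k : ℕ) :
    IsWeaklyRegular (QuotSMulTop (r ^ (k + 1)) M) rs := by
  induction k with
  | zero => rwa [zero_add, pow_one]
  | succ k ih => rw [pow_succ']; exact h.quotSMulTop_mul (hr.pow (k + 1)) ih

theorem _root_.IsLocalRing.isSMulRegular_quotient_of_isWeaklyRegular_cons [IsLocalRing R]
    [IsNoetherian R M] {y : R} {ys : List R} (h : IsWeaklyRegular M (y :: ys))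
    (hmem : ∀ r ∈ y :: ys, r ∈ maximalIdeal R) :
    IsSMulRegular (M ⧸ Ideal.ofList ys • (⊤ : Submodule R M)) y := by
  have hperm := IsLocalRing.isWeaklyRegular_of_perm_of_subset_maximalIdeal h
    (List.perm_append_singleton y ys).symm hmem
  exact (isWeaklyRegular_singleton_iff _ y).mp ((isWeaklyRegular_append_iff M ys [y]).mp hperm).2

theorem IsWeaklyRegular.mem_ofList_smul_top_of_prod_pow_smul_mem [IsLocalRing R]
    [IsNoetherian R M] {L : List R} (hL : IsWeaklyRegular M L)
    (hmem : ∀ r ∈ L, r ∈ maximalIdeal R) (n : ℕ) {m : M}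
    (hm : L.prod ^ n • m ∈ Ideal.ofList (L.map (· ^ (n + 1))) • (⊤ : Submodule R M)) :
    m ∈ Ideal.ofList L • (⊤ : Submodule R M) := by
  induction L generalizing M with
  | nil => simpa using hm
  | cons y ys ih =>
    obtain ⟨hy, hys⟩ := (isWeaklyRegular_cons_iff M y ys).mp hL
    have hcolon : y ^ n • m ∈ (y ^ (n + 1) • ⊤ ⊔ Ideal.ofList ys • ⊤ : Submodule R M) := by
      rw [← Quotient.mk_mem_smul_top_iff]
      refine ih (hys.quotSMulTop_pow hy n) (fun r hr => hmem r (List.mem_cons_of_mem y hr)) ?_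
      rw [← Quotient.mk_smul, Quotient.mk_mem_smul_top_iff, ← Ideal.ofList_cons_smul, smul_smul,
        ← mul_pow, mul_comm]
      simpa only [List.prod_cons, List.map_cons] using hm
    rw [Ideal.ofList_cons_smul]
    exact mem_smul_top_sup_of_pow_smul_mem
      (isSMulRegular_quotient_of_isWeaklyRegular_cons hL hmem) hcolon

theorem IsRegular.mem_maximalIdeal [IsLocalRing R] {rs : List R} (h : IsRegular M rs) :
    ∀ r ∈ rs, r ∈ maximalIdeal R := fun _ hr =>
  le_maximalIdeal (J := Ideal.ofList rs) (fun htop => h.top_ne_smul (by rw [htop, top_smul]))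
    (Ideal.subset_span hr)

end RingTheory.Sequence

theorem limClosure_eq_of_regular_general {R : Type*} [CommRing R] [IsNoetherianRing R] [IsLocalRing R]
    {M : Type*} [AddCommGroup M] [Module R M] [Module.Finite R M]
    {t : ℕ} (x : Fin t → R)
    (hreg : RingTheory.Sequence.IsRegular M (List.ofFn x)) :
    limClosure x = ((Ideal.span (Set.range x) • (⊤ : Submodule R M) : Submodule R M) : Set M) := by
  have hspan (f : Fin t → R) : Ideal.span (Set.range f) = Ideal.ofList (List.ofFn f) := by
    congr 1
    ext
    simp [List.mem_ofFn]
  have hmap (k : ℕ) : List.ofFn (fun i => x i ^ k) = (List.ofFn x).map (· ^ k) :=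
    List.map_ofFn.symm
  ext m
  simp only [limClosure, Set.mem_ofPred_eq, SetLike.mem_coe, hspan, hmap, ← List.prod_ofFn]
  constructor
  · rintro ⟨n, -, hm⟩
    exact hreg.toIsWeaklyRegular.mem_ofList_smul_top_of_prod_pow_smul_mem
      hreg.mem_maximalIdeal n hm
  · exact fun hm => ⟨1, one_pos, by simpa using prod_smul_mem_ofList_map_sq_smul_top _ hm⟩

/-- If `x_1, …, x_t` is an `M`-regular sequence with `t = dim M > 0`, then the
limit closure `(x)_M^{lim}` equals `(x_1, …, x_t)M`. -/
theorem limClosure_eq_of_regular {R : Type*} [CommRing R] [IsNoetherianRing R] [IsLocalRing R]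
    {M : Type*} [AddCommGroup M] [Module R M] [Module.Finite R M]
    {t : ℕ} (ht : 0 < t) (x : Fin t → R)
    (hreg : RingTheory.Sequence.IsRegular M (List.ofFn x))
    (hdim : ringKrullDim (R ⧸ Module.annihilator R M) = t) :
    limClosure x = ((Ideal.span (Set.range x) • (⊤ : Submodule R M) : Submodule R M) : Set M) :=
  limClosure_eq_of_regular_general x hreg
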